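/- (Necessary optimality condition for the Bolza problem with Markovian strategies.) Let R : I × ℝⁿ × U → ℝ be bounded and Borel measurable, and define the extended Hamiltonian H̄_t(x,υ) = ∇p̄_t(x)·f(t,x,υ) + R(t,x,υ), where w̄, w are Markovian strategies, μ̄, μ are solutions of the FPK equation for w̄ and for w respectively with the same initial law ϑ, and p̄ is a bounded C^{1,2} function (with bounded ∂_t p̄, ∇_x p̄, ∇²_x p̄) satisfying ∂_s p̄_s(x) + ∇p̄_s(x)·f(s,x,w̄_s(x)) + β Δp̄_s(x) + R(s,x,w̄_s(x)) = 0 and p̄_T = ℓ. Assume that for almost every s ∈ I and every x ∈ ℝⁿ, H̄_s(x,w_s(x)) = min over υ ∈ U of H̄_s(x,υ), and that w̄ is optimal for the Bolza cost: ∫ ℓ dμ̄_T + ∫_0^T ∫ R(s,x,w̄_s(x)) dμ̄_s ds ≤ ∫ ℓ dμ_T + ∫_0^T ∫ R(s,x,w_s(x)) dμ_s ds. Then for almost every t ∈ I: ∫ H̄_t(x,w_t(x)) dμ_t(x) = ∫ H̄_t(x,w̄_t(x)) dμ_t(x). -/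

import Mathlib

open MeasureTheory intervalIntegral

noncomputable section

/-- Euclidean space ℝⁿ. -/
abbrev Eu (n : ℕ) : Type := EuclideanSpace ℝ (Fin n)

/-- Laplacian of `φ` at `x`: the trace of the Hessian. -/
def lapl {n : ℕ} (φ : Eu n → ℝ) (x : Eu n) : ℝ :=
  ∑ i : Fin n, fderiv ℝ (fun y => fderiv ℝ φ y (EuclideanSpace.single i 1)) x
    (EuclideanSpace.single i 1)

/-- `η` is of class C^{1,2} (C¹ in time, C² in space) and bounded together with
`∂ₜη`, `∇ₓη` and `∇²ₓη`. -/
structure C12Bdd {n : ℕ} (η : ℝ → Eu n → ℝ) : Prop where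
  smooth_t : ∀ x, ContDiff ℝ 1 fun t => η t x
  smooth_x : ∀ t, ContDiff ℝ 2 (η t)
  bdd : ∃ C, ∀ t x, |η t x| ≤ C
  bdd_dt : ∃ C, ∀ t x, |deriv (fun s => η s x) t| ≤ C
  bdd_grad : ∃ C, ∀ t x, ‖gradient (η t) x‖ ≤ C
  bdd_hess : ∃ C, ∀ t x, ‖fderiv ℝ (fderiv ℝ (η t)) x‖ ≤ C

/-- `μ : [0,T] → P(ℝⁿ)` is a (distributional) solution of the Fokker–Planck–Kolmogorov
equation for the Markovian strategy `w`, drift `f`, diffusion constant `β`, with initial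
law `ϑ`. -/
def IsFPK {n m : ℕ} (T : ℝ) (f : ℝ → Eu n → Eu m → Eu n) (β : ℝ)
    (w : ℝ → Eu n → Eu m) (ϑ : Measure (Eu n)) (μ : ℝ → Measure (Eu n)) : Prop :=
  (∀ t, IsProbabilityMeasure (μ t)) ∧
  μ 0 = ϑ ∧
  (∀ φ : Eu n → ℝ, Continuous φ → (∃ C, ∀ x, |φ x| ≤ C) →
    Measurable fun t => ∫ x, φ x ∂μ t) ∧
  (∀ η : ℝ → Eu n → ℝ, C12Bdd η → ∀ t ∈ Set.Icc (0:ℝ) T,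
    (∫ x, η t x ∂μ t) - (∫ x, η 0 x ∂μ 0) =
      ∫ s in (0:ℝ)..t, ∫ x, (deriv (fun r => η r x) s
        + (inner ℝ (gradient (η s) x) (f s x (w s x)) : ℝ) + β * lapl (η s) x) ∂μ s)

/-!
Testing the FPK equation of a strategy `w` against `p̄` and using the backward equation of `p̄`
turns the cost of `w` into `∫ p̄₀ dϑ` plus the gap `∫₀ᵀ (∫ H̄(w) dμₛ - ∫ H̄(w̄) dμₛ) ds`; for `w̄`
itself the gap vanishes. Optimality of `w̄` therefore makes the gap of `w` nonnegative, while the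
minimality of `H̄` at `w` makes its integrand nonpositive for a.e. `s`, so the integrand vanishes
a.e. The integrand is measurable in `s` because `μ` is a Markov kernel (approximate indicators of
closed sets by bounded continuous functions) and `p̄` is jointly continuous (it is Lipschitz
in `t`, uniformly in `x`).
-/

open Set Function

theorem Measurable.measure_of_measurable_integral {α Ω : Type*} [MeasurableSpace α]
    [PseudoEMetricSpace Ω] [MeasurableSpace Ω] [BorelSpace Ω] {μ : α → Measure Ω}
    [∀ a, IsProbabilityMeasure (μ a)]
    (h : ∀ φ : Ω → ℝ, Continuous φ → (∃ C, ∀ x, |φ x| ≤ C) →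
      Measurable fun a => ∫ x, φ x ∂μ a) :
    Measurable μ := by
  refine .measure_of_isPiSystem_of_isProbabilityMeasure
    (BorelSpace.measurable_eq.trans borel_eq_generateFrom_isClosed) isPiSystem_isClosed
    fun F hF => ?_
  obtain ⟨δ, -, hδ_pos, hδ_lim⟩ := exists_seq_strictAnti_tendsto (0 : ℝ)
  have h_real : Measurable fun a => (μ a).real F := by
    refine measurable_of_tendsto_metrizable (fun k => h _ ?_ ⟨1, fun x => ?_⟩)
      (tendsto_pi_nhds.2 fun a =>
        tendsto_integral_thickenedIndicator_of_isClosed (μ a) hF hδ_pos hδ_lim)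
    · exact NNReal.continuous_coe.comp (thickenedIndicator (hδ_pos k) F).continuous
    · rw [NNReal.abs_eq]
      exact_mod_cast thickenedIndicator_le_one (hδ_pos k) F x
  simpa only [ofReal_measureReal (measure_ne_top _ F)] using h_real.ennreal_ofReal

namespace C12Bdd

variable {n : ℕ} {η : ℝ → Eu n → ℝ}

theorem exists_lipschitzWith_time (h : C12Bdd η) : ∃ K, ∀ x, LipschitzWith K fun t => η t x := by
  obtain ⟨C, hC⟩ := h.bdd_dt
  refine ⟨C.toNNReal, fun x => lipschitzWith_of_nnnorm_deriv_le
    ((h.smooth_t x).differentiable one_ne_zero) fun t => ?_⟩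
  rw [← NNReal.coe_le_coe, coe_nnnorm, Real.coe_toNNReal']
  exact (hC t x).trans (le_max_left _ _)

theorem continuous_uncurry (h : C12Bdd η) : Continuous (uncurry η) := by
  obtain ⟨K, hK⟩ := h.exists_lipschitzWith_time
  exact continuous_prod_of_continuous_lipschitzWith _ K
    (fun t => (h.smooth_x t).continuous) hK

theorem measurable_gradient (h : C12Bdd η) :
    Measurable fun q : ℝ × Eu n => gradient (η q.1) q.2 :=
  (InnerProductSpace.toDual ℝ (Eu n)).symm.continuous.measurable.comp
    (measurable_fderiv_with_param ℝ h.continuous_uncurry)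

end C12Bdd

section BoundedIntegrand

variable {α E : Type*} [MeasurableSpace α] [MeasurableSpace E] {μ : α → Measure E}
  {F : α → E → ℝ}

theorem integrable_of_measurable_uncurry [∀ a, IsFiniteMeasure (μ a)]
    (hF : Measurable (uncurry F)) (hF_bdd : ∃ C, ∀ a x, |F a x| ≤ C) (a : α) :
    Integrable (F a) (μ a) :=
  have ⟨C, hC⟩ := hF_bdd
  .of_bound (hF.comp measurable_prodMk_left).aestronglyMeasurable C (.of_forall (hC a))

variable [∀ a, IsProbabilityMeasure (μ a)]

theorem measurable_integral_of_measurable_uncurry (hμ : Measurable μ)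
    (hF : Measurable (uncurry F)) : Measurable fun a => ∫ x, F a x ∂μ a :=
  have : ProbabilityTheory.IsMarkovKernel ⟨μ, hμ⟩ := ⟨inferInstance⟩
  (hF.stronglyMeasurable.integral_kernel_prod_right' (κ := ⟨μ, hμ⟩)).measurable

theorem intervalIntegrable_integral_of_measurable_uncurry {μ : ℝ → Measure E}
    [∀ s, IsProbabilityMeasure (μ s)] {F : ℝ → E → ℝ} (hμ : Measurable μ)
    (hF : Measurable (uncurry F)) (hF_bdd : ∃ C, ∀ s x, |F s x| ≤ C) (a b : ℝ) :
    IntervalIntegrable (fun s => ∫ x, F s x ∂μ s) volume a b := by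
  obtain ⟨C, hC⟩ := hF_bdd
  rw [intervalIntegrable_iff]
  exact .of_bound measure_Ioc_lt_top
    (measurable_integral_of_measurable_uncurry hμ hF).aestronglyMeasurable C
    (.of_forall fun s => by
      simpa using norm_integral_le_of_norm_le_const (μ := μ s)
        (.of_forall fun x => (Real.norm_eq_abs (F s x)).trans_le (hC s x)))

end BoundedIntegrand

theorem ae_eq_zero_of_nonpos_of_integral_nonneg {g : ℝ → ℝ} {a b : ℝ} (hab : a ≤ b)
    (hg : ∀ᵐ s ∂volume.restrict (Icc a b), g s ≤ 0) (hg_int : IntervalIntegrable g volume a b)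
    (h : 0 ≤ ∫ s in a..b, g s) : ∀ᵐ s ∂volume.restrict (Icc a b), g s = 0 := by
  rw [← Measure.restrict_congr_set Ioc_ae_eq_Icc] at hg ⊢
  rw [intervalIntegral.integral_of_le hab] at h
  rw [intervalIntegrable_iff_integrableOn_Ioc_of_le hab] at hg_int
  have h_neg : 0 ≤ᵐ[volume.restrict (Ioc a b)] -g := hg.mono fun s hs => neg_nonneg.2 hs
  have h_zero : ∫ s in Ioc a b, -g s = 0 :=
    le_antisymm (by rw [MeasureTheory.integral_neg]; linarith) (integral_nonneg_of_ae h_neg)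
  filter_upwards [(integral_eq_zero_iff_of_nonneg_ae h_neg hg_int.neg).1 h_zero] with s hs
  simpa using hs

section Hamiltonian

variable {n m : ℕ} {p : ℝ → Eu n → ℝ} {f : ℝ → Eu n → Eu m → Eu n}
  {R : ℝ → Eu n → Eu m → ℝ}

def hamiltonian (p : ℝ → Eu n → ℝ) (f : ℝ → Eu n → Eu m → Eu n)
    (R : ℝ → Eu n → Eu m → ℝ) (t : ℝ) (x : Eu n) (υ : Eu m) : ℝ :=
  inner ℝ (gradient (p t) x) (f t x υ) + R t x υ

theorem measurable_hamiltonian_comp (hp : C12Bdd p)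
    (hf : Measurable fun q : ℝ × Eu n × Eu m => f q.1 q.2.1 q.2.2)
    (hR : Measurable fun q : ℝ × Eu n × Eu m => R q.1 q.2.1 q.2.2) {w : ℝ → Eu n → Eu m}
    (hw : Measurable fun q : ℝ × Eu n => w q.1 q.2) :
    Measurable fun q : ℝ × Eu n => hamiltonian p f R q.1 q.2 (w q.1 q.2) :=
  have hw' : Measurable fun q : ℝ × Eu n => (q.1, q.2, w q.1 q.2) :=
    measurable_fst.prodMk (measurable_snd.prodMk hw)
  (hp.measurable_gradient.inner (hf.comp hw')).add (hR.comp hw')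

theorem exists_abs_hamiltonian_le (hp : C12Bdd p) (hf : ∃ C, ∀ t x υ, ‖f t x υ‖ ≤ C)
    (hR : ∃ C, ∀ t x υ, |R t x υ| ≤ C) : ∃ C, ∀ t x υ, |hamiltonian p f R t x υ| ≤ C := by
  obtain ⟨Cp, hCp⟩ := hp.bdd_grad
  obtain ⟨Cf, hCf⟩ := hf
  obtain ⟨CR, hCR⟩ := hR
  refine ⟨Cp * Cf + CR, fun t x υ => (abs_add_le _ _).trans (add_le_add ?_ (hCR t x υ))⟩
  exact (abs_real_inner_le_norm _ _).trans
    (mul_le_mul (hCp t x) (hCf t x υ) (norm_nonneg _) ((norm_nonneg _).trans (hCp t x)))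

variable {μ : ℝ → Measure (Eu n)} {w : ℝ → Eu n → Eu m}

theorem integrable_hamiltonian_comp [∀ s, IsFiniteMeasure (μ s)] (hp : C12Bdd p)
    (hf_meas : Measurable fun q : ℝ × Eu n × Eu m => f q.1 q.2.1 q.2.2)
    (hf_bdd : ∃ C, ∀ t x υ, ‖f t x υ‖ ≤ C)
    (hR_meas : Measurable fun q : ℝ × Eu n × Eu m => R q.1 q.2.1 q.2.2)
    (hR_bdd : ∃ C, ∀ t x υ, |R t x υ| ≤ C) (hw : Measurable fun q : ℝ × Eu n => w q.1 q.2)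
    (s : ℝ) : Integrable (fun x => hamiltonian p f R s x (w s x)) (μ s) :=
  integrable_of_measurable_uncurry (measurable_hamiltonian_comp hp hf_meas hR_meas hw)
    ((exists_abs_hamiltonian_le hp hf_bdd hR_bdd).imp fun _ hC s x => hC s x _) s

theorem intervalIntegrable_integral_hamiltonian_comp [∀ s, IsProbabilityMeasure (μ s)]
    (hμ : Measurable μ) (hp : C12Bdd p)
    (hf_meas : Measurable fun q : ℝ × Eu n × Eu m => f q.1 q.2.1 q.2.2)
    (hf_bdd : ∃ C, ∀ t x υ, ‖f t x υ‖ ≤ C)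
    (hR_meas : Measurable fun q : ℝ × Eu n × Eu m => R q.1 q.2.1 q.2.2)
    (hR_bdd : ∃ C, ∀ t x υ, |R t x υ| ≤ C) (hw : Measurable fun q : ℝ × Eu n => w q.1 q.2)
    (a b : ℝ) :
    IntervalIntegrable (fun s => ∫ x, hamiltonian p f R s x (w s x) ∂μ s) volume a b :=
  intervalIntegrable_integral_of_measurable_uncurry
    (F := fun s x => hamiltonian p f R s x (w s x)) hμ
    (measurable_hamiltonian_comp hp hf_meas hR_meas hw)
    ((exists_abs_hamiltonian_le hp hf_bdd hR_bdd).imp fun _ hC s x => hC s x _) a b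

end Hamiltonian

namespace IsFPK

variable {n m : ℕ} {T β : ℝ} {f : ℝ → Eu n → Eu m → Eu n} {w : ℝ → Eu n → Eu m}
  {ϑ : Measure (Eu n)} {μ : ℝ → Measure (Eu n)}

theorem measurable (h : IsFPK T f β w ϑ μ) : Measurable μ :=
  have := h.1
  .measure_of_measurable_integral h.2.2.1

theorem integral_terminal_sub_initial_add_cost (h : IsFPK T f β w ϑ μ) (hT : 0 ≤ T)
    {R : ℝ → Eu n → Eu m → ℝ} {wb : ℝ → Eu n → Eu m}
    (hf_meas : Measurable fun q : ℝ × Eu n × Eu m => f q.1 q.2.1 q.2.2)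
    (hf_bdd : ∃ C, ∀ t x υ, ‖f t x υ‖ ≤ C)
    (hR_meas : Measurable fun q : ℝ × Eu n × Eu m => R q.1 q.2.1 q.2.2)
    (hR_bdd : ∃ C, ∀ t x υ, |R t x υ| ≤ C)
    (hw : Measurable fun q : ℝ × Eu n => w q.1 q.2)
    (hwb : Measurable fun q : ℝ × Eu n => wb q.1 q.2)
    {p : ℝ → Eu n → ℝ} (hp : C12Bdd p)
    (hpde : ∀ s ∈ Icc 0 T, ∀ x : Eu n,
      deriv (fun r => p r x) s + (inner ℝ (gradient (p s) x) (f s x (wb s x)) : ℝ)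
        + β * lapl (p s) x + R s x (wb s x) = 0) :
    (∫ x, p T x ∂μ T) - (∫ x, p 0 x ∂ϑ) + ∫ s in 0..T, ∫ x, R s x (w s x) ∂μ s =
      ∫ s in 0..T, ((∫ x, hamiltonian p f R s x (w s x) ∂μ s) -
        ∫ x, hamiltonian p f R s x (wb s x) ∂μ s) := by
  have := h.1
  have hRw : Measurable (uncurry fun s x => R s x (w s x)) :=
    hR_meas.comp (measurable_fst.prodMk (measurable_snd.prodMk hw))
  have hRw_bdd : ∃ C, ∀ s x, |R s x (w s x)| ≤ C := hR_bdd.imp fun _ hC s x => hC s x _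
  have h_integrand : ∀ s ∈ uIcc 0 T,
      ∫ x, (deriv (fun r => p r x) s + (inner ℝ (gradient (p s) x) (f s x (w s x)) : ℝ)
        + β * lapl (p s) x) ∂μ s =
      ((∫ x, hamiltonian p f R s x (w s x) ∂μ s) - ∫ x, hamiltonian p f R s x (wb s x) ∂μ s)
        - ∫ x, R s x (w s x) ∂μ s := by
    intro s hs
    have hHw_int := integrable_hamiltonian_comp (μ := μ) hp hf_meas hf_bdd hR_meas hR_bdd hw s
    have hHwb_int := integrable_hamiltonian_comp (μ := μ) hp hf_meas hf_bdd hR_meas hR_bdd hwb s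
    have hRw_int := integrable_of_measurable_uncurry (μ := μ) hRw hRw_bdd s
    calc _ = ∫ x, (hamiltonian p f R s x (w s x) - hamiltonian p f R s x (wb s x)
          - R s x (w s x)) ∂μ s := by
          refine integral_congr_ae (.of_forall fun x => ?_)
          have := hpde s (uIcc_of_le hT ▸ hs) x
          simp only [hamiltonian]
          linarith
      _ = _ := by
          rw [← integral_sub hHw_int hHwb_int]
          exact integral_sub (hHw_int.sub hHwb_int) hRw_int
  rw [← h.2.1, h.2.2.2 p hp T ⟨hT, le_rfl⟩, intervalIntegral.integral_congr h_integrand,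
    intervalIntegral.integral_sub
      ((intervalIntegrable_integral_hamiltonian_comp h.measurable hp hf_meas hf_bdd hR_meas hR_bdd
          hw 0 T).sub
        (intervalIntegrable_integral_hamiltonian_comp h.measurable hp hf_meas hf_bdd hR_meas hR_bdd
          hwb 0 T))
      (intervalIntegrable_integral_of_measurable_uncurry h.measurable hRw hRw_bdd 0 T)]
  ring

end IsFPK

theorem necessary_optimality_bolza_markovian_general
    {n m : ℕ} (T : ℝ) (hT : 0 < T)
    (U : Set (Eu m))
    (f : ℝ → Eu n → Eu m → Eu n)
    (hfmeas : Measurable fun p : ℝ × Eu n × Eu m => f p.1 p.2.1 p.2.2)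
    (hfbdd : ∃ C, ∀ t x υ, ‖f t x υ‖ ≤ C)
    (β : ℝ)
    (ℓ : Eu n → ℝ)
    (R : ℝ → Eu n → Eu m → ℝ)
    (hRmeas : Measurable fun p : ℝ × Eu n × Eu m => R p.1 p.2.1 p.2.2)
    (hRbdd : ∃ C, ∀ t x υ, |R t x υ| ≤ C)
    (wb : ℝ → Eu n → Eu m)
    (hwbmeas : Measurable fun p : ℝ × Eu n => wb p.1 p.2)
    (hwbU : ∀ t x, wb t x ∈ U)
    (w : ℝ → Eu n → Eu m)
    (hwmeas : Measurable fun p : ℝ × Eu n => w p.1 p.2)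
    (ϑ : Measure (Eu n)) (μb μ : ℝ → Measure (Eu n))
    (hFPKb : IsFPK T f β wb ϑ μb) (hFPK : IsFPK T f β w ϑ μ)
    (pb : ℝ → Eu n → ℝ) (hpb : C12Bdd pb)
    (hpde : ∀ s ∈ Set.Icc (0:ℝ) T, ∀ x : Eu n,
      deriv (fun r => pb r x) s + (inner ℝ (gradient (pb s) x) (f s x (wb s x)) : ℝ)
        + β * lapl (pb s) x + R s x (wb s x) = 0)
    (hterm : ∀ x, pb T x = ℓ x)
    (hmin : ∀ᵐ s ∂(volume.restrict (Set.Icc (0:ℝ) T)), ∀ x : Eu n, ∀ υ ∈ U,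
      (inner ℝ (gradient (pb s) x) (f s x (w s x)) : ℝ) + R s x (w s x) ≤
        (inner ℝ (gradient (pb s) x) (f s x υ) : ℝ) + R s x υ)
    (hopt : (∫ x, ℓ x ∂μb T) + (∫ s in (0:ℝ)..T, ∫ x, R s x (wb s x) ∂μb s) ≤
      (∫ x, ℓ x ∂μ T) + ∫ s in (0:ℝ)..T, ∫ x, R s x (w s x) ∂μ s) :
    ∀ᵐ t ∂(volume.restrict (Set.Icc (0:ℝ) T)),
      (∫ x, ((inner ℝ (gradient (pb t) x) (f t x (w t x)) : ℝ) + R t x (w t x)) ∂μ t) =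
        ∫ x, ((inner ℝ (gradient (pb t) x) (f t x (wb t x)) : ℝ) + R t x (wb t x)) ∂μ t := by
  have := hFPK.1
  have h_cost := hFPK.integral_terminal_sub_initial_add_cost hT.le hfmeas hfbdd hRmeas hRbdd
    hwmeas hwbmeas hpb hpde
  have h_costb := hFPKb.integral_terminal_sub_initial_add_cost hT.le hfmeas hfbdd hRmeas hRbdd
    hwbmeas hwbmeas hpb hpde
  simp only [hterm, sub_self, intervalIntegral.integral_zero] at h_cost h_costb
  have h_integrable (v : ℝ → Eu n → Eu m) (hv : Measurable fun q : ℝ × Eu n => v q.1 q.2) :=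
    integrable_hamiltonian_comp (μ := μ) hpb hfmeas hfbdd hRmeas hRbdd hv
  have h_intervalIntegrable (v : ℝ → Eu n → Eu m)
      (hv : Measurable fun q : ℝ × Eu n => v q.1 q.2) :=
    intervalIntegrable_integral_hamiltonian_comp hFPK.measurable hpb hfmeas hfbdd hRmeas hRbdd
      hv 0 T
  have h_gap_nonpos : ∀ᵐ s ∂volume.restrict (Icc 0 T),
      (∫ x, hamiltonian pb f R s x (w s x) ∂μ s) - ∫ x, hamiltonian pb f R s x (wb s x) ∂μ s
        ≤ 0 := by
    filter_upwards [hmin] with s hs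
    exact sub_nonpos.2 (integral_mono (h_integrable w hwmeas s) (h_integrable wb hwbmeas s)
      fun x => hs x _ (hwbU s x))
  -- `h_cost - h_costb` together with `hopt` gives `0 ≤ ∫₀ᵀ gap`
  filter_upwards [ae_eq_zero_of_nonpos_of_integral_nonneg hT.le h_gap_nonpos
    ((h_intervalIntegrable w hwmeas).sub (h_intervalIntegrable wb hwbmeas)) (by linarith)]
    with s hs
  exact sub_eq_zero.1 hs

theorem necessary_optimality_bolza_markovian
    {n m : ℕ} (hn : 1 ≤ n) (hm : 1 ≤ m) (T : ℝ) (hT : 0 < T)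
    (U : Set (Eu m)) (hUne : U.Nonempty) (hUcp : IsCompact U)
    (f : ℝ → Eu n → Eu m → Eu n)
    (hfmeas : Measurable fun p : ℝ × Eu n × Eu m => f p.1 p.2.1 p.2.2)
    (hfbdd : ∃ C, ∀ t x υ, ‖f t x υ‖ ≤ C)
    (β : ℝ) (hβ : 0 < β)
    (ℓ : Eu n → ℝ) (hℓ : ContDiff ℝ 2 ℓ) (hℓbdd : ∃ C, ∀ x, |ℓ x| ≤ C)
    (R : ℝ → Eu n → Eu m → ℝ)
    (hRmeas : Measurable fun p : ℝ × Eu n × Eu m => R p.1 p.2.1 p.2.2)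
    (hRbdd : ∃ C, ∀ t x υ, |R t x υ| ≤ C)
    (wb : ℝ → Eu n → Eu m)
    (hwbmeas : Measurable fun p : ℝ × Eu n => wb p.1 p.2)
    (hwbU : ∀ t x, wb t x ∈ U)
    (w : ℝ → Eu n → Eu m)
    (hwmeas : Measurable fun p : ℝ × Eu n => w p.1 p.2)
    (hwU : ∀ t x, w t x ∈ U)
    (ϑ : Measure (Eu n)) (μb μ : ℝ → Measure (Eu n))
    (hFPKb : IsFPK T f β wb ϑ μb) (hFPK : IsFPK T f β w ϑ μ)
    (pb : ℝ → Eu n → ℝ) (hpb : C12Bdd pb)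
    (hpde : ∀ s ∈ Set.Icc (0:ℝ) T, ∀ x : Eu n,
      deriv (fun r => pb r x) s + (inner ℝ (gradient (pb s) x) (f s x (wb s x)) : ℝ)
        + β * lapl (pb s) x + R s x (wb s x) = 0)
    (hterm : ∀ x, pb T x = ℓ x)
    (hmin : ∀ᵐ s ∂(volume.restrict (Set.Icc (0:ℝ) T)), ∀ x : Eu n, ∀ υ ∈ U,
      (inner ℝ (gradient (pb s) x) (f s x (w s x)) : ℝ) + R s x (w s x) ≤
        (inner ℝ (gradient (pb s) x) (f s x υ) : ℝ) + R s x υ)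
    (hopt : (∫ x, ℓ x ∂μb T) + (∫ s in (0:ℝ)..T, ∫ x, R s x (wb s x) ∂μb s) ≤
      (∫ x, ℓ x ∂μ T) + ∫ s in (0:ℝ)..T, ∫ x, R s x (w s x) ∂μ s) :
    ∀ᵐ t ∂(volume.restrict (Set.Icc (0:ℝ) T)),
      (∫ x, ((inner ℝ (gradient (pb t) x) (f t x (w t x)) : ℝ) + R t x (w t x)) ∂μ t) =
        ∫ x, ((inner ℝ (gradient (pb t) x) (f t x (wb t x)) : ℝ) + R t x (wb t x)) ∂μ t :=
  necessary_optimality_bolza_markovian_general T hT U f hfmeas hfbdd β ℓ R hRmeas hRbdd wb hwbmeas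
    hwbU w hwmeas ϑ μb μ hFPKb hFPK pb hpb hpde hterm hmin hopt
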